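/- Let H, R be finite-dimensional complex Hilbert spaces, B = ℂ², and |ψ⟩ a unit vector in H⊗B⊗R. Let γ ∈ [0,1] and ε ∈ [0,1]. If there exists a (γ,ε)-radiation decoder against |ψ⟩, then there exists a (1, γ·ε)-radiation decoder against |ψ⟩. -/

import Mathlib

open Matrix BigOperators
open scoped ComplexOrder

noncomputable section

namespace BHRD

/-- A (qu)bit index. -/
abbrev Bit := ZMod 2

/-- The Pauli `X` matrix. -/
def Xm : Matrix Bit Bit ℂ := Matrix.of fun i j => if i = j + 1 then 1 else 0

/-- The Pauli `Z` matrix. -/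
def Zm : Matrix Bit Bit ℂ := Matrix.of fun i j => if i = j then (if j = 1 then -1 else 1) else 0

/-- The Pauli mask `X^x Z^z`. -/
def pauli (x z : Bit) : Matrix Bit Bit ℂ := Xm ^ x.val * Zm ^ z.val

/-- The EPR vector `(|00⟩+|11⟩)/√2`. -/
def epr : Bit × Bit → ℂ := fun p => if p.1 = p.2 then (((Real.sqrt 2 : ℝ) : ℂ))⁻¹ else 0

variable {dH dR : ℕ}

/-- The reduced density matrix of `|ψ⟩ ∈ H ⊗ B ⊗ R` on `B ⊗ R`, i.e. `Tr_H |ψ⟩⟨ψ|`. -/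
def rhoBR (ψ : Fin dH × Bit × Fin dR → ℂ) :
    Matrix (Bit × Fin dR) (Bit × Fin dR) ℂ :=
  Matrix.of fun p q => ∑ h : Fin dH, ψ (h, p) * (starRingEnd ℂ) (ψ (h, q))

/-- `(X^x Z^z) ⊗ I_R` acting on `B ⊗ R`. -/
def maskB (dR : ℕ) (x z : Bit) : Matrix (Bit × Fin dR) (Bit × Fin dR) ℂ :=
  Matrix.of fun p q => if p.2 = q.2 then pauli x z p.1 q.1 else 0

/-- The masked state `ρ^{xz} = (X^x Z^z ⊗ I) Tr_H|ψ⟩⟨ψ| (X^x Z^z ⊗ I)†`. -/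
def rhoXZ (ψ : Fin dH × Bit × Fin dR → ℂ) (x z : Bit) :
    Matrix (Bit × Fin dR) (Bit × Fin dR) ℂ :=
  maskB dR x z * rhoBR ψ * (maskB dR x z)ᴴ

/-- `K` is a family of Kraus operators for a (trace-preserving) quantum channel. -/
def IsKraus {α β : Type*} [Fintype α] [Fintype β] [DecidableEq β] {k : ℕ}
    (K : Fin k → Matrix α β ℂ) : Prop :=
  ∑ i, (K i)ᴴ * K i = 1

/-- Application of the channel with Kraus operators `K` to a state `ρ`. -/
def applyCh {α β : Type*} [Fintype α] [Fintype β] {k : ℕ}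
    (K : Fin k → Matrix α β ℂ) (ρ : Matrix β β ℂ) : Matrix α α ℂ :=
  ∑ i, K i * ρ * (K i)ᴴ

/-- The extension `id_B ⊗ A` of a channel `A : R → D ⊗ F` given by a Kraus operator `K`:
a Kraus operator from `B ⊗ R` to `B ⊗ D ⊗ F`. -/
def extB (K : Matrix (Bit × Bit) (Fin dR) ℂ) :
    Matrix (Bit × Bit × Bit) (Bit × Fin dR) ℂ :=
  Matrix.of fun p q => if p.1 = q.1 then K p.2 q.2 else 0

/-- The projector `I_{B⊗D} ⊗ |0⟩⟨0|_F` on `B ⊗ D ⊗ F`. -/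
def PF0 : Matrix (Bit × Bit × Bit) (Bit × Bit × Bit) ℂ :=
  Matrix.of fun p q =>
    if p.1 = q.1 ∧ p.2.1 = q.2.1 ∧ p.2.2 = 0 ∧ q.2.2 = 0 then 1 else 0

/-- The projector `|epr⟩⟨epr|_{B⊗D} ⊗ |0⟩⟨0|_F` on `B ⊗ D ⊗ F`. -/
def Pepr0 : Matrix (Bit × Bit × Bit) (Bit × Bit × Bit) ℂ :=
  Matrix.of fun p q =>
    (if p.2.2 = 0 ∧ q.2.2 = 0 then 1 else 0) *
      (epr (p.1, p.2.1) * (starRingEnd ℂ) (epr (q.1, q.2.1)))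

/-- `K` is (the Kraus family of) a `(γ,ε)`-radiation decoder against `ψ`. -/
def IsRadDecoder (ψ : Fin dH × Bit × Fin dR → ℂ) (γ ε : ℝ) {k : ℕ}
    (K : Fin k → Matrix (Bit × Bit) (Fin dR) ℂ) : Prop :=
  IsKraus K ∧
  γ ≤ ((PF0 * applyCh (fun i => extB (K i)) (rhoBR ψ)).trace).re ∧
  ((PF0 * applyCh (fun i => extB (K i)) (rhoBR ψ)).trace).re * (1/4 + (3/4) * ε) ≤
    ((Pepr0 * applyCh (fun i => extB (K i)) (rhoBR ψ)).trace).re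

/-- The projector `I_P ⊗ |0⟩⟨0|_F` on `P ⊗ F`. -/
def QF0 : Matrix ((Bit × Bit) × Bit) ((Bit × Bit) × Bit) ℂ :=
  Matrix.of fun p q => if p.1 = q.1 ∧ p.2 = 0 ∧ q.2 = 0 then 1 else 0

/-- The projector `|x,z⟩⟨x,z|_P ⊗ |0⟩⟨0|_F` on `P ⊗ F`. -/
def Qxz0 (x z : Bit) : Matrix ((Bit × Bit) × Bit) ((Bit × Bit) × Bit) ℂ :=
  Matrix.of fun p q => if p = ((x, z), 0) ∧ q = ((x, z), 0) then 1 else 0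

/-- `K` is (the Kraus family of) a `(γ,ε)`-superdense decoder against `ψ`. -/
def IsSupDecoder (ψ : Fin dH × Bit × Fin dR → ℂ) (γ ε : ℝ) {k : ℕ}
    (K : Fin k → Matrix ((Bit × Bit) × Bit) (Bit × Fin dR) ℂ) : Prop :=
  IsKraus K ∧
  γ ≤ (1/4) * ∑ x : Bit, ∑ z : Bit, ((QF0 * applyCh K (rhoXZ ψ x z)).trace).re ∧
  ((1/4) * ∑ x : Bit, ∑ z : Bit, ((QF0 * applyCh K (rhoXZ ψ x z)).trace).re) *
      (1/4 + (3/4) * ε) ≤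
    (1/4) * ∑ x : Bit, ∑ z : Bit, ((Qxz0 x z * applyCh K (rhoXZ ψ x z)).trace).re

end BHRD

/-!
Post-compose the decoder with the channel `fallbackKraus` on `D ⊗ F`: it keeps the state when
the flag `F` reads `0`, and otherwise replaces `D` by the maximally mixed state and resets the
flag to `0`. The flag of the new decoder always reads `0`, and since a maximally mixed `D` has
overlap `1/4` with `|epr⟩` whatever the state of `B`, its EPR weight is `a + (1 - γ')/4`, where
`γ' ≥ γ` and `a ≥ γ' (1/4 + 3ε/4)` are the flag and EPR weights of the old decoder; this is at
least `1/4 + 3γ'ε/4 ≥ 1/4 + 3γε/4`. Both weights are computed in the Heisenberg picture, by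
pulling the projectors `PF0` and `Pepr0` back through the fallback channel.
-/

namespace BHRD

open scoped Kronecker

section Channels

variable {ι α β γ : Type*}

def dualCh [Fintype ι] [Fintype α] (K : ι → Matrix α β ℂ) (P : Matrix α α ℂ) : Matrix β β ℂ :=
  ∑ i, (K i)ᴴ * P * K i

theorem isKraus_iff_dualCh_one [Fintype α] [Fintype β] [DecidableEq α] [DecidableEq β] {k : ℕ}
    (K : Fin k → Matrix α β ℂ) : IsKraus K ↔ dualCh K 1 = 1 := by
  rw [IsKraus, dualCh]
  simp only [Matrix.mul_one]

theorem trace_mul_sum_sandwich [Fintype ι] [Fintype α] [Fintype β] (K : ι → Matrix α β ℂ)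
    (P : Matrix α α ℂ) (σ : Matrix β β ℂ) :
    (P * ∑ i, K i * σ * (K i)ᴴ).trace = (dualCh K P * σ).trace := by
  simp only [dualCh, Matrix.mul_sum, Matrix.sum_mul, Matrix.trace_sum]
  refine Finset.sum_congr rfl fun i _ => ?_
  rw [← Matrix.mul_assoc, ← Matrix.mul_assoc, Matrix.trace_mul_cycle]
  simp only [Matrix.mul_assoc]

theorem trace_sum_sandwich [Fintype ι] [Fintype α] [Fintype β] [DecidableEq α] [DecidableEq β]
    {K : ι → Matrix α β ℂ} (hK : dualCh K 1 = 1) (σ : Matrix β β ℂ) :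
    (∑ i, K i * σ * (K i)ᴴ).trace = σ.trace := by
  rw [← Matrix.one_mul (∑ i, _), trace_mul_sum_sandwich, hK, Matrix.one_mul]

theorem dualCh_eq_one_of_mul_eq [Fintype ι] [Fintype α] [DecidableEq α] [DecidableEq β]
    {K : ι → Matrix α β ℂ} {P : Matrix α α ℂ} (hK : dualCh K 1 = 1) (hP : ∀ i, P * K i = K i) :
    dualCh K P = 1 := by
  simpa only [dualCh, Matrix.mul_assoc, hP, Matrix.one_mul] using hK

theorem dualCh_one_kronecker [Fintype ι] [Fintype α] {m : Type*} [Fintype m] [DecidableEq m]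
    (K : ι → Matrix α β ℂ) (P : Matrix α α ℂ) :
    dualCh (fun i => (1 : Matrix m m ℂ) ⊗ₖ K i) (1 ⊗ₖ P) = 1 ⊗ₖ dualCh K P := by
  simp only [dualCh, conjTranspose_kronecker, conjTranspose_one, ← mul_kronecker_mul,
    Matrix.one_mul]
  ext
  simp [Matrix.sum_apply, Finset.mul_sum]

/-- The Kraus family of the composite channel `L ∘ K`, reindexed by `Fin` as `IsKraus` and
`applyCh` require. -/
def compKraus [Fintype ι] [Fintype β] {k : ℕ} (L : ι → Matrix γ β ℂ)
    (K : Fin k → Matrix β α ℂ) : Fin (Fintype.card (Fin k × ι)) → Matrix γ α ℂ :=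
  fun j => L ((Fintype.equivFin _).symm j).2 * K ((Fintype.equivFin _).symm j).1

theorem sum_compKraus [Fintype ι] [Fintype β] {M : Type*} [AddCommMonoid M] {k : ℕ}
    (L : ι → Matrix γ β ℂ) (K : Fin k → Matrix β α ℂ) (f : Matrix γ α ℂ → M) :
    ∑ j, f (compKraus L K j) = ∑ i, ∑ l, f (L l * K i) :=
  ((Fintype.equivFin _).symm.sum_comp fun p => f (L p.2 * K p.1)).trans
    (Fintype.sum_prod_type _)

theorem applyCh_compKraus [Fintype ι] [Fintype α] [Fintype β] [Fintype γ] {k : ℕ}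
    (L : ι → Matrix γ β ℂ) (K : Fin k → Matrix β α ℂ) (ρ : Matrix α α ℂ) :
    applyCh (compKraus L K) ρ = ∑ l, L l * applyCh K ρ * (L l)ᴴ := by
  rw [applyCh, sum_compKraus L K fun M => M * ρ * Mᴴ, Finset.sum_comm]
  simp only [applyCh, Matrix.mul_sum, Matrix.sum_mul, conjTranspose_mul, Matrix.mul_assoc]

theorem dualCh_compKraus [Fintype ι] [Fintype β] [Fintype γ] {k : ℕ} (L : ι → Matrix γ β ℂ)
    (K : Fin k → Matrix β α ℂ) (P : Matrix γ γ ℂ) :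
    dualCh (compKraus L K) P = dualCh K (dualCh L P) := by
  rw [dualCh, sum_compKraus L K fun M => Mᴴ * P * M]
  simp only [dualCh, Matrix.mul_sum, Matrix.sum_mul, conjTranspose_mul, Matrix.mul_assoc]

theorem isKraus_compKraus [Fintype ι] [Fintype α] [Fintype β] [Fintype γ] [DecidableEq α]
    [DecidableEq β] [DecidableEq γ] {k : ℕ} {L : ι → Matrix γ β ℂ}
    {K : Fin k → Matrix β α ℂ} (hK : IsKraus K) (hL : dualCh L 1 = 1) :
    IsKraus (compKraus L K) := by
  rw [isKraus_iff_dualCh_one] at hK ⊢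
  rw [dualCh_compKraus, hL, hK]

end Channels

theorem sum_bit {M : Type*} [AddCommMonoid M] (f : Bit → M) : ∑ x : Bit, f x = f 0 + f 1 :=
  Fin.sum_univ_two f

theorem forall_bit {P : Bit → Prop} : (∀ b, P b) ↔ P 0 ∧ P 1 :=
  ⟨fun h => ⟨h 0, h 1⟩, fun h b => by fin_cases b; exacts [h.1, h.2]⟩

theorem trace_rhoBR {dH dR : ℕ} {ψ : Fin dH × Bit × Fin dR → ℂ}
    (hψ : ∑ p, Complex.normSq (ψ p) = 1) : (rhoBR ψ).trace = 1 := by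
  rw [Fintype.sum_prod_type] at hψ
  simp only [rhoBR, Matrix.trace, Matrix.diag_apply, Matrix.of_apply, Complex.mul_conj]
  rw [Finset.sum_comm]
  exact_mod_cast hψ

theorem extB_eq_kronecker {dR : ℕ} (K : Matrix (Bit × Bit) (Fin dR) ℂ) :
    extB K = (1 : Matrix Bit Bit ℂ) ⊗ₖ K := by
  ext p q
  simp [extB, Matrix.one_apply]

theorem trace_applyCh_extB {dR k : ℕ} {K : Fin k → Matrix (Bit × Bit) (Fin dR) ℂ}
    (hK : IsKraus K) (ρ : Matrix (Bit × Fin dR) (Bit × Fin dR) ℂ) :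
    (applyCh (fun i => extB (K i)) ρ).trace = ρ.trace := by
  refine trace_sum_sandwich ?_ ρ
  rw [isKraus_iff_dualCh_one] at hK
  simp only [extB_eq_kronecker]
  rw [← one_kronecker_one (m := Bit) (n := Bit × Bit), dualCh_one_kronecker, hK,
    one_kronecker_one]

theorem extB_compKraus {ι : Type*} [Fintype ι] {dR k : ℕ}
    (L : ι → Matrix (Bit × Bit) (Bit × Bit) ℂ) (K : Fin k → Matrix (Bit × Bit) (Fin dR) ℂ) :
    (fun j => extB (compKraus L K j)) =
      compKraus (fun l => (1 : Matrix Bit Bit ℂ) ⊗ₖ L l) (fun i => extB (K i)) := by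
  ext1 j
  simp only [compKraus, extB_eq_kronecker, ← mul_kronecker_mul, Matrix.one_mul]

def projF0 : Matrix (Bit × Bit) (Bit × Bit) ℂ :=
  Matrix.of fun p q => if p = q ∧ q.2 = 0 then 1 else 0

def fallbackKraus : Option (Bit × Bit) → Matrix (Bit × Bit) (Bit × Bit) ℂ
  | none => projF0
  | some (d, d') =>
    Matrix.of fun p q => if p = (d, 0) ∧ q = (d', 1) then ((Real.sqrt 2 : ℝ) : ℂ)⁻¹ else 0

theorem sqrt_two_inv_mul_self :
    ((Real.sqrt 2 : ℝ) : ℂ)⁻¹ * ((Real.sqrt 2 : ℝ) : ℂ)⁻¹ = 2⁻¹ := by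
  rw [← mul_inv, ← Complex.ofReal_mul, Real.mul_self_sqrt zero_le_two]; norm_num

theorem PF0_eq_kronecker : PF0 = (1 : Matrix Bit Bit ℂ) ⊗ₖ projF0 := by
  ext ⟨a, d, f⟩ ⟨a', d', f'⟩
  simp only [PF0, projF0, kroneckerMap_apply, Matrix.one_apply, Matrix.of_apply, Prod.ext_iff]
  split_ifs <;> simp_all

theorem dualCh_fallbackKraus_one : dualCh fallbackKraus 1 = 1 := by
  ext ⟨d, f⟩ ⟨d', f'⟩
  revert d f d' f'
  norm_num [forall_bit, dualCh, Fintype.sum_option, Fintype.sum_prod_type, sum_bit,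
    Matrix.mul_apply, Matrix.one_apply, Matrix.sum_apply, fallbackKraus, projF0, Prod.ext_iff,
    sqrt_two_inv_mul_self]

theorem projF0_mul_fallbackKraus (i : Option (Bit × Bit)) :
    projF0 * fallbackKraus i = fallbackKraus i := by
  ext ⟨d, f⟩ ⟨d', f'⟩
  rcases i with _ | ⟨e, e'⟩ <;> revert d f d' f' <;>
  simp [forall_bit, Fintype.sum_prod_type, sum_bit, Matrix.mul_apply, fallbackKraus, projF0,
    Prod.ext_iff]

theorem dualCh_fallbackKraus_PF0 :
    dualCh (fun i => (1 : Matrix Bit Bit ℂ) ⊗ₖ fallbackKraus i) PF0 = 1 := by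
  rw [PF0_eq_kronecker, dualCh_one_kronecker,
    dualCh_eq_one_of_mul_eq dualCh_fallbackKraus_one projF0_mul_fallbackKraus, one_kronecker_one]

def eprF0 : Bit × Bit × Bit → ℂ := fun p => if p.2.2 = 0 then epr (p.1, p.2.1) else 0

theorem Pepr0_eq_vecMulVec : Pepr0 = vecMulVec eprF0 (star eprF0) := by
  ext p q
  simp only [Pepr0, eprF0, vecMulVec_apply, Matrix.of_apply, Pi.star_apply]
  split_ifs <;> simp_all

theorem conjTranspose_mul_vecMulVec_mul {R m n : Type*} [CommSemiring R] [StarRing R]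
    [Fintype m] (A : Matrix m n R) (v : m → R) :
    Aᴴ * vecMulVec v (star v) * A = vecMulVec (Aᴴ *ᵥ v) (star (Aᴴ *ᵥ v)) := by
  rw [mul_vecMulVec, vecMulVec_mul, Matrix.star_mulVec, conjTranspose_conjTranspose]

theorem kronecker_fallbackKraus_none_mulVec_eprF0 :
    ((1 : Matrix Bit Bit ℂ) ⊗ₖ fallbackKraus none)ᴴ *ᵥ eprF0 = eprF0 := by
  ext ⟨a, d, f⟩
  revert a d f
  simp [forall_bit, mulVec, dotProduct, Fintype.sum_prod_type, sum_bit, Prod.ext_iff,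
    Matrix.one_apply, fallbackKraus, projF0, eprF0, epr]

theorem kronecker_fallbackKraus_some_mulVec_eprF0 (d d' : Bit) :
    ((1 : Matrix Bit Bit ℂ) ⊗ₖ fallbackKraus (some (d, d')))ᴴ *ᵥ eprF0 =
      Pi.single (d, d', 1) 2⁻¹ := by
  ext ⟨a, e, f⟩
  revert d d' a e f
  simp [forall_bit, map_inv₀, Complex.conj_ofReal, mulVec, dotProduct, Fintype.sum_prod_type,
    sum_bit, Pi.single_apply, Prod.ext_iff, Matrix.one_apply, fallbackKraus, eprF0, epr,
    sqrt_two_inv_mul_self]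

theorem sum_vecMulVec_single_flag_one :
    ∑ d : Bit, ∑ d' : Bit,
      vecMulVec (Pi.single (d, d', 1) (2⁻¹ : ℂ)) (star (Pi.single (d, d', 1) 2⁻¹)) =
      (4 : ℝ)⁻¹ • (1 - PF0) := by
  ext ⟨a, e, f⟩ ⟨a', e', f'⟩
  revert a e f a' e' f'
  norm_num [forall_bit, sum_bit, Matrix.sum_apply, vecMulVec_apply, Matrix.one_apply, PF0,
    Pi.single_apply, Prod.ext_iff]

theorem dualCh_fallbackKraus_Pepr0 :
    dualCh (fun i => (1 : Matrix Bit Bit ℂ) ⊗ₖ fallbackKraus i) Pepr0 =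
      Pepr0 + (4 : ℝ)⁻¹ • (1 - PF0) := by
  simp only [dualCh, Pepr0_eq_vecMulVec, conjTranspose_mul_vecMulVec_mul, Fintype.sum_option,
    Fintype.sum_prod_type]
  rw [← sum_vecMulVec_single_flag_one, kronecker_fallbackKraus_none_mulVec_eprF0]
  simp only [kronecker_fallbackKraus_some_mulVec_eprF0]

theorem rad_decoder_amplify_confidence_general
    (dH dR : ℕ)
    (ψ : Fin dH × Bit × Fin dR → ℂ)
    (hψ : ∑ p, Complex.normSq (ψ p) = 1)
    (γ ε : ℝ) (hε : ε ∈ Set.Icc (0:ℝ) 1)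
    (hdec : ∃ (k : ℕ) (K : Fin k → Matrix (Bit × Bit) (Fin dR) ℂ),
      IsRadDecoder ψ γ ε K) :
    ∃ (k : ℕ) (K : Fin k → Matrix (Bit × Bit) (Fin dR) ℂ),
      IsRadDecoder ψ 1 (γ * ε) K := by
  obtain ⟨k, K, hK, hsucc, hfid⟩ := hdec
  set σ := applyCh (fun i => extB (K i)) (rhoBR ψ)
  have hσ : σ.trace = 1 := (trace_applyCh_extB hK _).trans (trace_rhoBR hψ)
  have hσ' : applyCh (fun j => extB (compKraus fallbackKraus K j)) (rhoBR ψ) =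
      ∑ l, ((1 : Matrix Bit Bit ℂ) ⊗ₖ fallbackKraus l) * σ * (1 ⊗ₖ fallbackKraus l)ᴴ := by
    rw [extB_compKraus, applyCh_compKraus]
  set σ' := applyCh (fun j => extB (compKraus fallbackKraus K j)) (rhoBR ψ)
  have hflag : (PF0 * σ').trace = 1 := by
    rw [hσ', trace_mul_sum_sandwich, dualCh_fallbackKraus_PF0, Matrix.one_mul, hσ]
  have hepr : (Pepr0 * σ').trace = (Pepr0 * σ).trace + (4 : ℝ)⁻¹ • (1 - (PF0 * σ).trace) := by
    rw [hσ', trace_mul_sum_sandwich, dualCh_fallbackKraus_Pepr0, Matrix.add_mul, trace_add,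
      Matrix.smul_mul, trace_smul, Matrix.sub_mul, trace_sub, Matrix.one_mul, hσ]
  refine ⟨_, compKraus fallbackKraus K, isKraus_compKraus hK dualCh_fallbackKraus_one, ?_, ?_⟩
  · rw [hflag, Complex.one_re]
  · rw [hflag, hepr, Complex.one_re, one_mul, Complex.add_re, Complex.smul_re, Complex.sub_re,
      Complex.one_re, smul_eq_mul]
    linarith [mul_le_mul_of_nonneg_right hsucc hε.1]

/-- if there exists a `(γ,ε)`-radiation decoder against `|ψ⟩`,
then there exists a `(1, γ·ε)`-radiation decoder against `|ψ⟩`. -/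
theorem rad_decoder_amplify_confidence
    (dH dR : ℕ) (hdH : 1 ≤ dH) (hdR : 1 ≤ dR)
    (ψ : Fin dH × Bit × Fin dR → ℂ)
    (hψ : ∑ p, Complex.normSq (ψ p) = 1)
    (γ ε : ℝ) (hγ : γ ∈ Set.Icc (0:ℝ) 1) (hε : ε ∈ Set.Icc (0:ℝ) 1)
    (hdec : ∃ (k : ℕ) (K : Fin k → Matrix (Bit × Bit) (Fin dR) ℂ),
      IsRadDecoder ψ γ ε K) :
    ∃ (k : ℕ) (K : Fin k → Matrix (Bit × Bit) (Fin dR) ℂ),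
      IsRadDecoder ψ 1 (γ * ε) K :=
  rad_decoder_amplify_confidence_general dH dR ψ hψ γ ε hε hdec

end BHRD
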